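/- Let R be a commutative ring, let n ≥ 1 be a natural number, and let y, x₁, x₂, y₁, …, y_{n+1}, c₂ be elements of R satisfying: x₁³ = 0, x₂³ = 0, y_j³ = 0 for every j; Σ_{j=1}^{n+1} y_j = 0; Σ_{1 ≤ j < k ≤ n+1} y_j·y_k = c₂; and y^{n+1} + c₂·y^{n-1} = 0. Then Σ_{j=1}^{n+1} (y_j + y)^{n+2} + x₁^{n+2} + x₂^{n+2} = −(n+1)·(n+3)·c₂·yⁿ. -/

import Mathlib

/-! The Chern roots `x₁, x₂` of the surface and `y_j + y` of the tautological part are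
expanded by the binomial theorem, which stops at the quadratic term because every root of `S`
cubes to zero. The linear term dies since `Σ y_j = 0`, the quadratic term is governed by
`Σ y_j² = (Σ y_j)² - 2 Σ_{j<k} y_j y_k = -2 c₂`, and the leading term `y^(n+2)` is reduced to
`-c₂ yⁿ` by the Grothendieck relation. -/

open Finset

section CommSemiring

variable {R ι : Type*} [CommSemiring R]

theorem Finset.sum_sq_add_two_mul_sum_Ioi_mul [Fintype ι] [LinearOrder ι]
    [LocallyFiniteOrderTop ι] [LocallyFiniteOrderBot ι] (f : ι → R) :
    ∑ i, f i ^ 2 + 2 * ∑ i, ∑ j ∈ Ioi i, f i * f j = (∑ i, f i) ^ 2 := by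
  have hsplit (i : ι) : ∑ j, f i * f j
      = f i ^ 2 + (∑ j ∈ Ioi i, f i * f j + ∑ j ∈ Iio i, f i * f j) := by
    rw [← sum_disjUnion (disjoint_Ioi_Iio i), Ioi_disjUnion_Iio,
      ← sum_compl_add_sum {i}, sum_singleton, sq, add_comm]
  have hswap : ∑ i, ∑ j ∈ Iio i, f i * f j = ∑ i, ∑ j ∈ Ioi i, f i * f j := by
    rw [sum_comm' (t' := univ) (s' := Ioi) (by simp)]
    simp_rw [mul_comm]
  rw [sq (∑ i, f i), sum_mul_sum, sum_congr rfl fun i _ ↦ hsplit i, sum_add_distrib,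
    sum_add_distrib, hswap, two_mul]

theorem add_pow_add_two_of_pow_three_eq_zero {a : R} (ha : a ^ 3 = 0) (y : R) (m : ℕ) :
    (a + y) ^ (m + 2)
      = y ^ (m + 2) + (m + 2) * a * y ^ (m + 1) + (m + 2).choose 2 * a ^ 2 * y ^ m := by
  have hhigh : ∀ k ∈ range (m + 2 + 1), k ∉ range 3 →
      a ^ k * y ^ (m + 2 - k) * (m + 2).choose k = 0 := by
    intro k _ hk
    rw [pow_eq_zero_of_le (by simpa using hk) ha, zero_mul, zero_mul]
  rw [add_pow, ← sum_subset (range_subset_range.2 (by omega)) hhigh]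
  simp only [sum_range_succ, range_one, sum_singleton, pow_zero, tsub_zero, one_mul,
    Nat.choose_zero_right, Nat.cast_one, mul_one, pow_one, Nat.add_one_sub_one,
    Nat.choose_one_right, Nat.cast_add, Nat.cast_ofNat, add_tsub_cancel_right]
  ring

theorem sum_add_pow_add_two_of_pow_three_eq_zero [Fintype ι] {a : ι → R}
    (ha : ∀ i, a i ^ 3 = 0) (y : R) (m : ℕ) :
    ∑ i, (a i + y) ^ (m + 2) = Fintype.card ι * y ^ (m + 2)
      + (m + 2) * (∑ i, a i) * y ^ (m + 1) + (m + 2).choose 2 * (∑ i, a i ^ 2) * y ^ m := by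
  simp only [add_pow_add_two_of_pow_three_eq_zero (ha _), sum_add_distrib, ← sum_mul,
    ← mul_sum, sum_const, card_univ, nsmul_eq_mul]

end CommSemiring

/-- In any commutative ring, if `x₁³ = x₂³ = 0`, each `y_j³ = 0`,
`Σ_j y_j = 0`, `Σ_{j<k} y_j y_k = c₂`, and `y^(n+1) + c₂·y^(n-1) = 0`, then
`Σ_j (y_j + y)^(n+2) + x₁^(n+2) + x₂^(n+2) = −(n+1)(n+3)·c₂·yⁿ`. -/
theorem sum_chern_root_powers_projectivisation {R : Type*} [CommRing R] (n : ℕ) (hn : 1 ≤ n)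
    (y x₁ x₂ c₂ : R) (Y : Fin (n + 1) → R)
    (hx₁ : x₁ ^ 3 = 0) (hx₂ : x₂ ^ 3 = 0) (hY : ∀ j, Y j ^ 3 = 0)
    (hc₁ : ∑ j, Y j = 0)
    (hc₂ : ∑ j, ∑ k ∈ Finset.Ioi j, Y j * Y k = c₂)
    (hrel : y ^ (n + 1) + c₂ * y ^ (n - 1) = 0) :
    (∑ j, (Y j + y) ^ (n + 2)) + x₁ ^ (n + 2) + x₂ ^ (n + 2) =
      -((n + 1 : R) * (n + 3 : R)) * c₂ * y ^ n := by
  have hsq : ∑ j, Y j ^ 2 = -(2 * c₂) := by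
    have hsum := sum_sq_add_two_mul_sum_Ioi_mul Y
    rw [hc₁, hc₂] at hsum
    linear_combination hsum
  obtain ⟨m, rfl⟩ := Nat.exists_eq_add_of_le' hn
  have hgroth : y ^ (m + 3) = -(c₂ * y ^ (m + 1)) := by
    rw [Nat.add_sub_cancel] at hrel
    linear_combination y * hrel
  have hchoose : ((m + 3).choose 2 : R) * 2 = (m + 3) * (m + 2) := by
    have h : (m + 3).choose 2 * 2 = (m + 3) * (m + 2) := by
      simpa using (Nat.add_one_mul_choose_eq (m + 2) 1).symm
    simpa using congrArg (Nat.cast : ℕ → R) h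
  rw [sum_add_pow_add_two_of_pow_three_eq_zero hY, hc₁, hsq,
    pow_eq_zero_of_le (by omega) hx₁, pow_eq_zero_of_le (by omega) hx₂]
  push_cast [Fintype.card_fin] at hgroth hchoose ⊢
  linear_combination (m + 2 : R) * hgroth - c₂ * y ^ (m + 1) * hchoose
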